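/- arXiv:2306.05227 — 2 statements merged into one kernel-verified Lean document; each statement's English description precedes it below -/
import Mathlib

section
/- Strong Lagrange duality with an interior point: let X be a linear vector space, Ω ⊆ X convex, f : Ω → ℝ concave, g : X → ℝ convex, and suppose there exists x₁ ∈ Ω with g(x₁) < 0. If μ₀ = sup{ f(x) : x ∈ Ω, g(x) ≤ 0 } is finite, then μ₀ = min_{τ ≥ 0} sup_{x∈Ω} [ f(x) − τ g(x) ], and the minimum over τ is attained at some τ° ≥ 0. -/
/-!
Weak duality is immediate: on the feasible set `f ≤ f - τ g` for every `τ ≥ 0`. For the reverse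
inequality a multiplier `τ ≥ 0` with `f - τ g ≤ μ₀` on all of `Ω` is needed, i.e.
`(f y - μ₀) / g y ≤ τ ≤ (μ₀ - f x) / (-g x)` whenever `g x < 0 < g y`. Such a `τ` exists because
every lower constraint is below every upper one: the convex combination of `x` and `y` on which
the linear interpolation of `g` vanishes is feasible, and concavity of `f` there gives the
comparison. The Slater point supplies one upper constraint, so the lower ones are bounded.
-/

lemma sSup_le_iSup_lagrangian {X : Type*} {Om : Set X} {f g : X → ℝ}
    (hne : {x | x ∈ Om ∧ g x ≤ 0}.Nonempty) {τ : ℝ} (hτ : 0 ≤ τ) :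
    ((sSup (f '' {x | x ∈ Om ∧ g x ≤ 0}) : ℝ) : EReal) ≤
      ⨆ x : Om, ((f x - τ * g x : ℝ) : EReal) := by
  refine EReal.ge_of_forall_gt_iff_ge.1 fun z hz => ?_
  obtain ⟨_, ⟨x, ⟨hx, hgx⟩, rfl⟩, hzx⟩ :=
    exists_lt_of_lt_csSup (hne.image f) (EReal.coe_lt_coe_iff.1 hz)
  have : z ≤ f x - τ * g x := by nlinarith
  exact (EReal.coe_le_coe_iff.2 this).trans
    (le_iSup (fun x : Om => ((f x - τ * g x : ℝ) : EReal)) ⟨x, hx⟩)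

section LagrangeMultiplier

variable {X : Type*} [AddCommGroup X] [Module ℝ X] {Om : Set X} {f g : X → ℝ} {μ : ℝ}

lemma excess_div_le_slack_div (hOm : Convex ℝ Om) (hf : ConcaveOn ℝ Om f)
    (hg : ConvexOn ℝ Om g) (hμ : ∀ x ∈ Om, g x ≤ 0 → f x ≤ μ) {x y : X} (hx : x ∈ Om)
    (hy : y ∈ Om) (hgx : g x < 0) (hgy : 0 < g y) :
    (f y - μ) / g y ≤ (μ - f x) / -g x := by
  have hd : 0 < g y - g x := by linarith
  set a := g y / (g y - g x)
  set b := -g x / (g y - g x)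
  have ha : 0 ≤ a := div_nonneg hgy.le hd.le
  have hb : 0 ≤ b := div_nonneg (neg_nonneg.2 hgx.le) hd.le
  have hab : a + b = 1 := by rw [← add_div, div_eq_one_iff_eq hd.ne']; ring
  have hgz : g (a • x + b • y) ≤ 0 := calc
    g (a • x + b • y) ≤ a * g x + b * g y := hg.2 hx hy ha hb hab
    _ = 0 := by field_simp; ring
  have hfz : a * f x + b * f y ≤ μ :=
    (hf.2 hx hy ha hb hab).trans (hμ _ (hOm hx hy ha hb hab) hgz)
  rw [div_le_div_iff₀ hgy (neg_pos.2 hgx)]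
  have : g y * f x + -g x * f y ≤ μ * (g y - g x) := by
    simpa only [a, b, div_mul_eq_mul_div, ← add_div, div_le_iff₀ hd] using hfz
  linarith

lemma exists_lagrange_multiplier (hOm : Convex ℝ Om) (hf : ConcaveOn ℝ Om f)
    (hg : ConvexOn ℝ Om g) {x₁ : X} (hx₁ : x₁ ∈ Om) (hx₁g : g x₁ < 0)
    (hμ : ∀ x ∈ Om, g x ≤ 0 → f x ≤ μ) :
    ∃ τ : ℝ, 0 ≤ τ ∧ ∀ x ∈ Om, f x - τ * g x ≤ μ := by
  set S := insert 0 ((fun y => (f y - μ) / g y) '' {y | y ∈ Om ∧ 0 < g y})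
  have hS : ∀ x ∈ Om, g x < 0 → ∀ s ∈ S, s ≤ (μ - f x) / -g x := by
    rintro x hx hgx s (rfl | ⟨y, ⟨hy, hgy⟩, rfl⟩)
    · exact div_nonneg (sub_nonneg.2 (hμ x hx hgx.le)) (neg_nonneg.2 hgx.le)
    · exact excess_div_le_slack_div hOm hf hg hμ hx hy hgx hgy
  have hbdd : BddAbove S := ⟨_, hS x₁ hx₁ hx₁g⟩
  refine ⟨sSup S, le_csSup hbdd (Set.mem_insert 0 _), fun x hx => ?_⟩
  rcases lt_trichotomy (g x) 0 with hgx | hgx | hgx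
  · have := csSup_le (Set.insert_nonempty _ _) (hS x hx hgx)
    rw [le_div_iff₀ (neg_pos.2 hgx)] at this
    linarith
  · simpa [hgx] using hμ x hx hgx.le
  · have := le_csSup hbdd (Set.mem_insert_of_mem 0 ⟨x, ⟨hx, hgx⟩, rfl⟩)
    rw [div_le_iff₀ hgx] at this
    linarith

end LagrangeMultiplier

theorem stmt14 {X : Type*} [AddCommGroup X] [Module ℝ X]
    (Om : Set X) (hOm : Convex ℝ Om) (f g : X → ℝ)
    (hf : ConcaveOn ℝ Om f) (hg : ConvexOn ℝ Set.univ g)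
    (x₁ : X) (hx₁ : x₁ ∈ Om) (hx₁g : g x₁ < 0)
    (hbdd : BddAbove (f '' {x | x ∈ Om ∧ g x ≤ 0}))
    (μ₀ : ℝ) (hμ₀ : μ₀ = sSup (f '' {x | x ∈ Om ∧ g x ≤ 0})) :
    ∃ τ : ℝ, 0 ≤ τ ∧
      (⨆ x : Om, ((f x - τ * g x : ℝ) : EReal)) = (μ₀ : EReal) ∧
      ∀ τ' : ℝ, 0 ≤ τ' →
        (μ₀ : EReal) ≤ ⨆ x : Om, ((f x - τ' * g x : ℝ) : EReal) := by
  have hfeas : ∀ x ∈ Om, g x ≤ 0 → f x ≤ μ₀ := fun x hx hgx =>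
    hμ₀ ▸ le_csSup hbdd ⟨x, ⟨hx, hgx⟩, rfl⟩
  obtain ⟨τ, hτ, hτμ⟩ :=
    exists_lagrange_multiplier hOm hf (hg.subset (Set.subset_univ _) hOm) hx₁ hx₁g hfeas
  have weak : ∀ τ' : ℝ, 0 ≤ τ' → (μ₀ : EReal) ≤ ⨆ x : Om, ((f x - τ' * g x : ℝ) : EReal) :=
    fun τ' hτ' => hμ₀ ▸ sSup_le_iSup_lagrangian ⟨x₁, hx₁, hx₁g.le⟩ hτ'
  refine ⟨τ, hτ, le_antisymm ?_ (weak τ hτ), weak⟩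
  exact iSup_le fun x => EReal.coe_le_coe_iff.2 (hτμ x x.2)
end

section
/- For ω > 0 and symmetric positive definite S₊, V with ω > max eig(S₊V), the function ω ↦ −(ω/2) ln det(I − S₊V/ω) is convex on the interval (max eig(S₊V), ∞). -/
/-!
Write `Sp = Lᴴ L` with `L` invertible. Then `Sp V = Lᴴ (L V)` has the characteristic polynomial of
the positive definite matrix `L V Lᴴ`, so with `λᵢ > 0` its eigenvalues,
`det (1 - ω⁻¹ Sp V) = ∏ᵢ (1 - λᵢ / ω)` and the function is `∑ᵢ (ω / 2) (log ω - log (ω - λᵢ))`.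
Each summand is convex on `(λᵢ, ∞)`: the second derivative of `ω (log ω - log (ω - λ))` is
`λ² / (ω (ω - λ)²)`.
-/

open Matrix Polynomial Set
open scoped MatrixOrder ComplexOrder

theorem ConvexOn.finset_sum {𝕜 E β ι : Type*} [Semiring 𝕜] [PartialOrder 𝕜] [AddCommMonoid E]
    [AddCommMonoid β] [PartialOrder β] [IsOrderedAddMonoid β] [SMul 𝕜 E] [Module 𝕜 β]
    {s : Set E} (hs : Convex 𝕜 s) (t : Finset ι) {f : ι → E → β}
    (hf : ∀ i ∈ t, ConvexOn 𝕜 s (f i)) : ConvexOn 𝕜 s fun x => ∑ i ∈ t, f i x := by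
  classical
  induction t using Finset.induction_on with
  | empty => simpa using convexOn_const 0 hs
  | insert i t hi ih =>
    simp only [Finset.sum_insert hi]
    exact (hf i (Finset.mem_insert_self i t)).add
      (ih fun j hj => hf j (Finset.mem_insert_of_mem hj))

theorem convexOn_mul_log_sub_log_sub {c : ℝ} (hc : 0 ≤ c) :
    ConvexOn ℝ (Ioi c) fun ω => ω * (Real.log ω - Real.log (ω - c)) := by
  have hpos : ∀ ω ∈ Ioi c, 0 < ω - c ∧ 0 < ω := fun ω (hω : c < ω) => ⟨by linarith, by linarith⟩
  have hlog : ∀ ω ∈ Ioi c,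
      HasDerivAt (fun ω => Real.log ω - Real.log (ω - c)) (ω⁻¹ - (ω - c)⁻¹) ω := fun ω hω =>
    (Real.hasDerivAt_log (hpos ω hω).2.ne').sub
      (by simpa using ((hasDerivAt_id ω).sub_const c).log (hpos ω hω).1.ne')
  have hf' : ∀ ω ∈ Ioi c, HasDerivAt (fun ω => ω * (Real.log ω - Real.log (ω - c)))
      (Real.log ω - Real.log (ω - c) - c / (ω - c)) ω := by
    intro ω hω
    obtain ⟨hωc, hω0⟩ := hpos ω hω
    refine ((hasDerivAt_id' ω).mul (hlog ω hω)).congr_deriv ?_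
    field_simp
    ring
  have hf'' : ∀ ω ∈ Ioi c, HasDerivAt (fun ω => Real.log ω - Real.log (ω - c) - c / (ω - c))
      (c ^ 2 / (ω * (ω - c) ^ 2)) ω := by
    intro ω hω
    obtain ⟨hωc, hω0⟩ := hpos ω hω
    refine ((hlog ω hω).sub ((hasDerivAt_const ω c).div ((hasDerivAt_id' ω).sub_const c)
      hωc.ne')).congr_deriv ?_
    field_simp
    ring
  refine convexOn_of_hasDerivWithinAt2_nonneg (convex_Ioi c)
    (fun ω hω => (hf' ω hω).continuousAt.continuousWithinAt)
    (fun ω hω => (hf' ω (interior_subset hω)).hasDerivWithinAt)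
    (fun ω hω => (hf'' ω (interior_subset hω)).hasDerivWithinAt) fun ω hω => ?_
  have := (hpos ω (interior_subset hω)).2
  positivity

theorem convexOn_neg_half_mul_log_one_sub_inv_mul {c : ℝ} (hc : 0 ≤ c) :
    ConvexOn ℝ (Ioi c) fun ω => -(ω / 2) * Real.log (1 - ω⁻¹ * c) := by
  refine ((convexOn_mul_log_sub_log_sub hc).smul (by norm_num : (0 : ℝ) ≤ 1 / 2)).congr
    fun ω (hω : c < ω) => ?_
  have hω0 : 0 < ω := hc.trans_lt hω
  have hωc : 0 < ω - c := sub_pos.2 hω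
  rw [show 1 - ω⁻¹ * c = (ω - c) / ω by field_simp, Real.log_div hωc.ne' hω0.ne']
  simp only [smul_eq_mul]
  ring

theorem Matrix.det_one_sub_inv_smul_of_charpoly_eq_prod {K n : Type*} [Field K] [Fintype n]
    [DecidableEq n] {A : Matrix n n K} {μ : n → K} (hA : A.charpoly = ∏ i, (X - C (μ i)))
    (ω : K) : (1 - ω⁻¹ • A).det = ∏ i, (1 - ω⁻¹ * μ i) := by
  rcases eq_or_ne ω 0 with rfl | hω
  · simp
  have : 1 - ω⁻¹ • A = ω⁻¹ • (scalar n ω - A) := by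
    rw [smul_sub, scalar_apply, ← smul_one_eq_diagonal, smul_smul, inv_mul_cancel₀ hω, one_smul]
  rw [this, det_smul, ← eval_charpoly, hA, eval_prod, Fintype.card, ← Finset.prod_const,
    ← Finset.prod_mul_distrib]
  simp only [eval_sub, eval_X, eval_C, mul_sub, inv_mul_cancel₀ hω]

theorem Matrix.PosDef.exists_posDef_charpoly_mul_eq {𝕜 n : Type*} [RCLike 𝕜] [Fintype n]
    [DecidableEq n] {A B : Matrix n n 𝕜} (hA : A.PosDef) (hB : B.PosDef) :
    ∃ C : Matrix n n 𝕜, C.PosDef ∧ (A * B).charpoly = C.charpoly := by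
  obtain ⟨L, hL, rfl⟩ :=
    CStarAlgebra.isStrictlyPositive_iff_eq_star_mul_self.mp hA.isStrictlyPositive
  exact ⟨L * B * star L, hL.posDef_star_right_conjugate_iff.2 hB, by
    rw [mul_assoc, charpoly_mul_comm, mul_assoc]⟩

theorem stmt17_general {n : ℕ} (Sp V : Matrix (Fin n) (Fin n) ℝ)
    (hSp : Sp.PosDef) (hV : V.PosDef) (m : ℝ)
    (hmax : ∀ μ ∈ spectrum ℝ (Sp * V), μ ≤ m) :
    ConvexOn ℝ (Set.Ioi m)
      (fun ω => -(ω / 2) * Real.log ((1 - ω⁻¹ • (Sp * V)).det)) := by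
  obtain ⟨B, hB, hchar⟩ := hSp.exists_posDef_charpoly_mul_eq hV
  set μ := hB.1.eigenvalues
  have hμ_pos : ∀ i, 0 < μ i := hB.eigenvalues_pos
  have hμ_le : ∀ i, μ i ≤ m := fun i => hmax _ <| by
    rw [mem_spectrum_iff_isRoot_charpoly, hchar, ← mem_spectrum_iff_isRoot_charpoly]
    exact hB.1.eigenvalues_mem_spectrum_real i
  have hcharpoly : (Sp * V).charpoly = ∏ i, (X - C (μ i)) := by
    simpa using hchar.trans hB.1.charpoly_eq
  refine (ConvexOn.finset_sum (convex_Ioi m) Finset.univ fun i _ =>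
    (convexOn_neg_half_mul_log_one_sub_inv_mul (hμ_pos i).le).subset
      (Ioi_subset_Ioi (hμ_le i)) (convex_Ioi m)).congr fun ω (hω : m < ω) => ?_
  have hfactor : ∀ i, 1 - ω⁻¹ * μ i ≠ 0 := fun i => by
    have hμω : μ i < ω := (hμ_le i).trans_lt hω
    exact (sub_pos.2 <| (inv_mul_lt_one₀ <| (hμ_pos i).trans hμω).2 hμω).ne'
  rw [det_one_sub_inv_smul_of_charpoly_eq_prod hcharpoly, Real.log_prod fun i _ => hfactor i,
    Finset.mul_sum]

theorem stmt17 {n : ℕ} (Sp V : Matrix (Fin n) (Fin n) ℝ)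
    (hSp : Sp.PosDef) (hV : V.PosDef) (m : ℝ)
    (hm : m ∈ spectrum ℝ (Sp * V)) (hmax : ∀ μ ∈ spectrum ℝ (Sp * V), μ ≤ m) :
    ConvexOn ℝ (Set.Ioi m)
      (fun ω => -(ω / 2) * Real.log ((1 - ω⁻¹ • (Sp * V)).det)) :=
  stmt17_general Sp V hSp hV m hmax
end
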